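/- arXiv:2208.09186 — 6 statements merged into one kernel-verified Lean document; each statement's English description precedes it below -/
import Mathlib

section
/- Let p ≥ 1 and let ε = (ε₁,…,ε_p) ∈ (ℝ*)^p be a vector all of whose components are infinitesimal. Then there exist an integer l with 1 ≤ l ≤ p, infinitesimal elements α₁,…,α_l ∈ ℝ*, and linearly independent vectors v₁,…,v_l ∈ ℝ^p such that ε = α₁·v₁ + α₁α₂·v₂ + ⋯ + (α₁α₂⋯α_l)·v_l, where the vectors vᵢ are coerced componentwise into (ℝ*)^p (Goze decomposition). -/
/-!
Let `a = e i₀` be a coordinate of maximal absolute value. Then every `e j / a` is finite, so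
`e = a (u + δ)` with `u` the standard part of `e / a`, `u i₀ = 1`, and `δ` infinitesimal with
`δ i₀ = 0`. Decomposing `δ`, whose support is strictly smaller, gives the remaining terms; their
vectors vanish at `i₀` while `u` does not, which keeps the family linearly independent. The bound
`l ≤ p` then comes for free from linear independence in `ℝ^p`.
-/

open Hyperreal ArchimedeanClass Finset

theorem Fin.prod_Iic_zero {M : Type*} [CommMonoid M] {n : ℕ} (g : Fin (n + 1) → M) :
    ∏ k ∈ Iic 0, g k = g 0 := by
  rw [← bot_eq_zero, Iic_bot, prod_singleton]

theorem Fin.prod_Iic_succ {M : Type*} [CommMonoid M] {n : ℕ} (g : Fin (n + 1) → M) (i : Fin n) :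
    ∏ k ∈ Iic i.succ, g k = g 0 * ∏ k ∈ Iic i, g k.succ := by
  rw [← bot_eq_zero, ← Icc_bot, ← mul_prod_Ioc_eq_prod_Icc bot_le, bot_eq_zero,
    ← Fin.finsetImage_succ_Iic, prod_image (Fin.succ_injective _).injOn]

theorem LinearIndependent.finCons_of_apply_ne_zero {R ι : Type*} [DivisionRing R] {n : ℕ}
    {u : ι → R} {w : Fin n → ι → R} (hw : LinearIndependent R w) {i₀ : ι} (hu : u i₀ ≠ 0)
    (hw₀ : ∀ k, w k i₀ = 0) : LinearIndependent R (Fin.cons u w : Fin (n + 1) → ι → R) := by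
  refine hw.finCons fun hmem => hu ?_
  have hspan : Submodule.span R (Set.range w) ≤ LinearMap.ker (LinearMap.proj i₀) := by
    rw [Submodule.span_le]
    rintro _ ⟨k, rfl⟩
    exact hw₀ k
  exact hspan hmem

namespace ArchimedeanClass

variable {K : Type*} [LinearOrder K] [Field K] [IsOrderedRing K]

theorem mk_div_nonneg_of_abs_le {x a : K} (h : |x| ≤ |a|) : 0 ≤ mk (x / a) := by
  rcases eq_or_ne a 0 with rfl | ha
  · simp
  · rw [← mk_one]
    exact mk_le_mk_of_abs (by rwa [abs_div, abs_one, div_le_one (abs_pos.mpr ha)])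

end ArchimedeanClass

section Goze

variable {K ι : Type*}

def gozeSum [CommSemiring K] (f : ℝ → K) {l : ℕ} (α : Fin l → K) (v : Fin l → ι → ℝ) (j : ι) :
    K :=
  ∑ i, (∏ k ∈ Iic i, α k) * f (v i j)

theorem gozeSum_cons [CommSemiring K] (f : ℝ → K) {l : ℕ} (a : K) (α : Fin l → K) (u : ι → ℝ)
    (w : Fin l → ι → ℝ) (j : ι) :
    gozeSum f (Fin.cons a α) (Fin.cons u w) j = a * (f (u j) + gozeSum f α w j) := by
  simp only [gozeSum, Fin.sum_univ_succ, Fin.prod_Iic_zero, Fin.prod_Iic_succ, Fin.cons_zero,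
    Fin.cons_succ, mul_add, mul_sum, mul_assoc]

variable [LinearOrder K] [Field K] [IsOrderedRing K] (f : ℝ →+*o K)

theorem exists_eq_mul_map_add_of_abs_le {e : ι → K} {i₀ : ι} (hmax : ∀ j, |e j| ≤ |e i₀|)
    (h₀ : e i₀ ≠ 0) :
    ∃ (u : ι → ℝ) (δ : ι → K), u i₀ = 1 ∧ δ i₀ = 0 ∧ (∀ j, e j = 0 → u j = 0 ∧ δ j = 0) ∧
      (∀ j, 0 < mk (δ j)) ∧ ∀ j, e j = e i₀ * (f (u j) + δ j) := by
  refine ⟨fun j => stdPart (e j / e i₀), fun j => e j / e i₀ - f (stdPart (e j / e i₀)),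
    ?_, ?_, fun j hj => ?_, fun j => mk_sub_stdPart_pos f (mk_div_nonneg_of_abs_le (hmax j)),
    fun j => ?_⟩
  · simp [div_self h₀]
  · simp [div_self h₀]
  · simp [hj]
  · simp [mul_div_cancel₀ _ h₀]

theorem exists_gozeSum_eq_of_support_subset (s : Finset ι) (e : ι → K) (he : ∀ j, 0 < mk (e j))
    (hs : ∀ j ∉ s, e j = 0) :
    ∃ (l : ℕ) (α : Fin l → K) (v : Fin l → ι → ℝ), (∀ k, 0 < mk (α k)) ∧
      LinearIndependent ℝ v ∧ (∀ k, ∀ j ∉ s, v k j = 0) ∧ gozeSum f α v = e := by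
  classical
  induction s using Finset.strongInduction generalizing e with
  | H s ih =>
  by_cases he₀ : e = 0
  · exact ⟨0, Fin.elim0, Fin.elim0, fun k => k.elim0, linearIndependent_empty_type,
      fun k => k.elim0, by ext; simp [gozeSum, he₀]⟩
  obtain ⟨j₁, hj₁⟩ := Function.ne_iff.mp he₀
  obtain ⟨i₀, hi₀, hmax_s⟩ := s.exists_max_image (fun j => |e j|)
    ⟨j₁, by_contra fun h => hj₁ (hs j₁ h)⟩
  have hmax : ∀ j, |e j| ≤ |e i₀| := fun j => by
    by_cases hj : j ∈ s
    · exact hmax_s j hj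
    · simp [hs j hj]
  have hei₀ : e i₀ ≠ 0 := fun h => hj₁ (abs_nonpos_iff.mp (by simpa [h] using hmax j₁))
  obtain ⟨u, δ, hu₀, hδ₀, huδ, hδ, heq⟩ := exists_eq_mul_map_add_of_abs_le f hmax hei₀
  obtain ⟨l, α, w, hα, hw, hws, hsum⟩ := ih (s.erase i₀) (erase_ssubset hi₀) δ hδ fun j hj => by
    rcases eq_or_ne j i₀ with rfl | hne
    · exact hδ₀
    · exact (huδ j (hs j fun h => hj (mem_erase.mpr ⟨hne, h⟩))).2
  refine ⟨l + 1, Fin.cons (e i₀) α, Fin.cons u w, Fin.cases (he i₀) hα,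
    hw.finCons_of_apply_ne_zero (by simp [hu₀]) fun k => hws k i₀ (notMem_erase i₀ s),
    Fin.cases (fun j hj => (huδ j (hs j hj)).1)
      (fun k j hj => hws k j fun h => hj (mem_of_mem_erase h)), ?_⟩
  ext j
  rw [gozeSum_cons, hsum, heq j]

theorem exists_gozeSum_eq [Fintype ι] [Nonempty ι] (e : ι → K) (he : ∀ j, 0 < mk (e j)) :
    ∃ l, 1 ≤ l ∧ l ≤ Fintype.card ι ∧ ∃ (α : Fin l → K) (v : Fin l → ι → ℝ),
      (∀ k, 0 < mk (α k)) ∧ LinearIndependent ℝ v ∧ gozeSum f α v = e := by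
  obtain ⟨l, α, v, hα, hv, -, hsum⟩ :=
    exists_gozeSum_eq_of_support_subset f univ e he fun j hj => absurd (mem_univ j) hj
  have hl : l ≤ Fintype.card ι := by simpa using hv.fintype_card_le_finrank
  rcases Nat.eq_zero_or_pos l with rfl | hl₀
  · refine ⟨1, le_rfl, Fintype.card_pos, 0, fun _ => 1, fun _ => by simp,
      linearIndependent_unique_iff.mpr one_ne_zero, ?_⟩
    rw [← hsum]
    ext j
    simp [gozeSum]
  · exact ⟨l, hl₀, hl, α, v, hα, hv, hsum⟩

end Goze

/-- Goze decomposition: a vector `e ∈ (ℝ*)^p` of infinitesimals can be written as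
`e = α₁ v₁ + α₁α₂ v₂ + ⋯ + α₁⋯α_l v_l` with the `α i` infinitesimal and the `v i`
linearly independent real vectors. -/
theorem goze_decomposition (p : ℕ) (hp : 1 ≤ p) (e : Fin p → ℝ*)
    (he : ∀ i, Infinitesimal (e i)) :
    ∃ (l : ℕ) (_ : 1 ≤ l) (_ : l ≤ p) (α : Fin l → ℝ*) (v : Fin l → (Fin p → ℝ)),
      (∀ i, Infinitesimal (α i)) ∧ LinearIndependent ℝ v ∧
      ∀ j : Fin p, e j = ∑ i : Fin l, (∏ k ∈ Finset.Iic i, α k) * ((v i j : ℝ) : ℝ*) := by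
  have : Nonempty (Fin p) := ⟨⟨0, hp⟩⟩
  obtain ⟨l, hl, hlp, α, v, hα, hv, hsum⟩ :=
    exists_gozeSum_eq coeRingHom e fun j => infinitesimal_iff.mp (he j)
  exact ⟨l, hl, by simpa using hlp, α, v, fun k => infinitesimal_iff.mpr (hα k), hv,
    fun j => (congrFun hsum j).symm⟩
end

section
/- Let Q = α₀ + α₁X + ⋯ + αₙXⁿ ∈ ℝ*[X] with n ≥ 1, every coefficient αᵢ finite, and the leading coefficient αₙ not infinitesimal. Then every root ξ ∈ ℝ* of Q is finite, and st ξ is a root of the real polynomial P = a₀ + a₁X + ⋯ + aₙXⁿ, where aᵢ = st αᵢ for i = 0,…,n. -/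
/-!
The finite elements of an ordered field `K` are the valuation ring of the Archimedean-class
valuation, and the standard part is a ring homomorphism from it to `ℝ`. As the leading coefficient
of `Q` is a unit of this ring, every root of `Q` is integral over it; valuation rings are integrally
closed, so the roots are finite. Applying the standard part homomorphism to
`Q(ξ) = 0` then gives `P(st ξ) = 0`.
-/

open Hyperreal Polynomial

namespace Polynomial

variable {R : Type*} [CommRing R] (p : R[X]) (T : Subring R) (hp : (p.coeffs : Set R) ⊆ T)

theorem aeval_toSubring (x : R) : aeval x (p.toSubring T hp) = p.eval x := by
  rw [aeval_def, ← eval_map]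
  exact congrArg (eval x) (map_toSubring p T hp)

theorem coe_leadingCoeff_toSubring : ((p.toSubring T hp).leadingCoeff : R) = p.leadingCoeff := by
  rw [leadingCoeff, natDegree_toSubring, coeff_toSubring', leadingCoeff]

end Polynomial

theorem Valuation.mem_integer_of_aeval_eq_zero {R Γ₀ : Type*} [CommRing R]
    [LinearOrderedCommGroupWithZero Γ₀] {v : Valuation R Γ₀} {p : v.integer[X]}
    (hp : IsUnit p.leadingCoeff) {x : R} (hx : aeval x p = 0) : x ∈ v.integer :=
  (Valuation.integer.integers v).mem_of_integral <| by
    simpa [smul_smul] using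
      (isIntegral_leadingCoeff_smul _ _ hx).smul ((hp.unit⁻¹ : _ˣ) : v.integer)

namespace ArchimedeanClass

variable {K : Type*} [LinearOrder K] [Field K] [IsOrderedRing K]

variable (K) in
noncomputable abbrev finiteSubring : Subring K := (addValuation K).toValuation.integer

theorem mem_finiteSubring {x : K} : x ∈ finiteSubring K ↔ 0 ≤ mk x := Iff.rfl

theorem isUnit_finiteSubring_iff {x : finiteSubring K} : IsUnit x ↔ mk (x : K) = 0 :=
  (Valuation.integer.integers _).isUnit_iff_valuation_eq_one.trans Iff.rfl

noncomputable def stdPartHom : finiteSubring K →+* ℝ where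
  toFun x := stdPart (x : K)
  map_one' := stdPart_one
  map_mul' x y := stdPart_mul (mem_finiteSubring.mp x.2) (mem_finiteSubring.mp y.2)
  map_zero' := stdPart_zero
  map_add' x y := stdPart_add (mem_finiteSubring.mp x.2) (mem_finiteSubring.mp y.2)

theorem stdPart_aeval (p : (finiteSubring K)[X]) (x : finiteSubring K) :
    stdPart (aeval (x : K) p) = (p.map stdPartHom).eval (stdPart (x : K)) := by
  rw [show (x : K) = algebraMap _ K x from rfl, aeval_algebraMap_apply]
  exact (eval₂_hom stdPartHom x).symm.trans (eval_map _ _).symm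

section FiniteCoeffs

variable {Q : K[X]} (hQ : ∀ i, 0 ≤ mk (Q.coeff i))
include hQ

theorem coeffs_subset_finiteSubring : (Q.coeffs : Set K) ⊆ finiteSubring K := by
  intro a ha
  obtain ⟨i, -, rfl⟩ := mem_coeffs_iff.mp ha
  exact hQ i

theorem mk_nonneg_of_isRoot (hlead : mk Q.leadingCoeff = 0) {ξ : K} (hξ : Q.IsRoot ξ) :
    0 ≤ mk ξ := by
  have hsub := coeffs_subset_finiteSubring hQ
  refine Valuation.mem_integer_of_aeval_eq_zero ?_ ((aeval_toSubring Q _ hsub ξ).trans hξ)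
  rwa [isUnit_finiteSubring_iff, coe_leadingCoeff_toSubring]

theorem stdPart_eval {P : ℝ[X]} (hP : ∀ i, P.coeff i = stdPart (Q.coeff i)) {x : K}
    (hx : 0 ≤ mk x) : stdPart (Q.eval x) = P.eval (stdPart x) := by
  have hsub := coeffs_subset_finiteSubring hQ
  rw [← aeval_toSubring Q _ hsub, show x = ((⟨x, hx⟩ : finiteSubring K) : K) from rfl,
    stdPart_aeval]
  congr 1
  ext i
  rw [hP, coeff_map]
  exact congrArg stdPart (coeff_toSubring' Q _ hsub)

end FiniteCoeffs

end ArchimedeanClass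

open ArchimedeanClass

theorem roots_finite_and_st_root_general (n : ℕ) (Q : Polynomial ℝ*)
    (hdeg : Q.natDegree = n)
    (hfin : ∀ i, ¬Infinite (Q.coeff i))
    (hlead : ¬Infinitesimal (Q.coeff n))
    (P : Polynomial ℝ) (hP : ∀ i, P.coeff i = st (Q.coeff i)) :
    ∀ ξ : ℝ*, Q.eval ξ = 0 → ¬Infinite ξ ∧ P.eval (st ξ) = 0 := by
  intro ξ hξ
  have hQ (i : ℕ) : 0 ≤ mk (Q.coeff i) := not_lt.mp (infinite_iff.not.mp (hfin i))
  have hQlead : mk Q.leadingCoeff = 0 := by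
    rw [leadingCoeff, hdeg]
    exact le_antisymm (not_lt.mp (infinitesimal_iff.not.mp hlead)) (hQ n)
  have hξfin : 0 ≤ mk ξ := mk_nonneg_of_isRoot hQ hQlead hξ
  have hP_stdPart (i : ℕ) : P.coeff i = stdPart (Q.coeff i) := (hP i).trans (st_eq _)
  refine ⟨infinite_iff.not.mpr hξfin.not_gt, ?_⟩
  rw [st_eq, ← stdPart_eval hQ hP_stdPart hξfin, hξ, stdPart_zero]

/-- If `Q ∈ ℝ*[X]` has degree `n ≥ 1`, all its coefficients are finite and its leading
coefficient is not infinitesimal, then every root `ξ` of `Q` is finite and the standard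
part `st ξ` is a root of the real polynomial `P` whose coefficients are the standard
parts of the coefficients of `Q`. -/
theorem roots_finite_and_st_root (n : ℕ) (hn : 1 ≤ n) (Q : Polynomial ℝ*)
    (hdeg : Q.natDegree = n)
    (hfin : ∀ i, ¬Infinite (Q.coeff i))
    (hlead : ¬Infinitesimal (Q.coeff n))
    (P : Polynomial ℝ) (hP : ∀ i, P.coeff i = st (Q.coeff i)) :
    ∀ ξ : ℝ*, Q.eval ξ = 0 → ¬Infinite ξ ∧ P.eval (st ξ) = 0 :=
  roots_finite_and_st_root_general n Q hdeg hfin hlead P hP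
end

section
/- Let P ∈ ℝ[X] be of degree n ≥ 1 and let u ∈ ℝ be a root of P of multiplicity r, so that P^{(i)}(u) = 0 for 0 ≤ i < r and P^{(r)}(u) ≠ 0. Define the linear map L : ℝ*[X] → ℝ* by L(H) = −r!·(eval of H at u)/P^{(r)}(u). Then for every *ℝ-deformation Q of P with Q ≠ P (viewing P in ℝ*[X]) and every root ξ ∈ ℝ* of Q with st ξ = u, there exists an infinitesimal ε ∈ ℝ* such that (ξ − u)^r = L(Q − P) + ε·‖Q − P‖, where for H ∈ ℝ*[X] we set ‖H‖ := max over 0 ≤ i ≤ n of |coeff_i(H)|. -/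
open Hyperreal Polynomial

set_option linter.deprecated false

/-!
Factor `P = (X - u)^r G`, so that `r! G(u) = P⁽ʳ⁾(u) ≠ 0`. With `H = Q - P`, the equation
`Q(ξ) = 0` reads `(ξ - u)^r G(ξ) = -H(ξ)`, while `L(H) = -H(u) / G(u)`. Hence
`((ξ - u)^r - L(H)) / ‖H‖ = (H(u)/‖H‖) / G(u) - (H(ξ)/‖H‖) / G(ξ)`. The polynomial `H / ‖H‖` has
coefficients bounded by `1`, hence finite, so its values at `u` and at `ξ ≈ u` have the same
standard part; and `G(ξ) ≈ G(u) ≠ 0`. So the difference is infinitesimal.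
-/

/-- The coercion `ℝ → ℝ*` as a ring homomorphism. -/
noncomputable def realToHyper : ℝ →+* ℝ* :=
  (Filter.Germ.coeRingHom _).comp (Pi.constRingHom ℕ ℝ)

/-- The sup-norm `‖H‖ = max_{0 ≤ i ≤ n} |coeff i H|` of a hyperreal polynomial. -/
noncomputable def polyNorm (n : ℕ) (H : Polynomial ℝ*) : ℝ* :=
  (Finset.range (n + 1)).sup' (Finset.nonempty_range_iff.mpr (Nat.succ_ne_zero n))
    fun i => |H.coeff i|

theorem Polynomial.exists_eq_X_sub_C_pow_mul_of_iterate_derivative {R : Type*} [CommRing R]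
    [IsDomain R] [CharZero R] {p : R[X]} {a : R} {r : ℕ}
    (hlt : ∀ i < r, (derivative^[i] p).eval a = 0) (hr : (derivative^[r] p).eval a ≠ 0) :
    ∃ q : R[X], p = (X - C a) ^ r * q ∧ (derivative^[r] p).eval a = r.factorial * q.eval a := by
  have hp : p ≠ 0 := by rintro rfl; simp at hr
  have hm : p.rootMultiplicity a = r := by
    refine le_antisymm
      (not_lt.1 fun h => hr (isRoot_iterate_derivative_of_lt_rootMultiplicity h)) ?_
    rcases r with _ | r
    · exact Nat.zero_le _
    · exact lt_rootMultiplicity_of_isRoot_iterate_derivative hp fun m hm => hlt m (by omega)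
  refine ⟨p /ₘ (X - C a) ^ r, ?_, ?_⟩
  · rw [← hm, pow_mul_divByMonic_rootMultiplicity_eq]
  · rw [← hm, eval_iterate_derivative_rootMultiplicity, nsmul_eq_mul]

namespace Hyperreal

theorem IsSt.pow {x : ℝ*} {s : ℝ} (h : IsSt x s) (k : ℕ) : IsSt (x ^ k) (s ^ k) := by
  induction k with
  | zero => simpa using isSt_refl_real 1
  | succ k ih => simpa only [pow_succ] using ih.mul h

theorem IsSt.sum {ι : Type*} (s : Finset ι) {f : ι → ℝ*} {g : ι → ℝ}
    (h : ∀ i ∈ s, IsSt (f i) (g i)) : IsSt (∑ i ∈ s, f i) (∑ i ∈ s, g i) := by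
  classical
  induction s using Finset.induction_on with
  | empty => simpa using isSt_refl_real 0
  | insert a t ha ih =>
    simp only [Finset.sum_insert ha]
    exact (h a (Finset.mem_insert_self a t)).add
      (ih fun i hi => h i (Finset.mem_insert_of_mem hi))

theorem IsSt.div {x y : ℝ*} {r s : ℝ} (hx : IsSt x r) (hy : IsSt y s) (hs : s ≠ 0) :
    IsSt (x / y) (r / s) := by
  simpa only [div_eq_mul_inv] using hx.mul (hy.inv fun h => hs (hy.unique h))

theorem IsSt.ne_zero {x : ℝ*} {r : ℝ} (hx : IsSt x r) (hr : r ≠ 0) : x ≠ 0 := by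
  rintro rfl
  exact hr (hx.unique (isSt_refl_real 0))

theorem exists_isSt_of_abs_le_one {x : ℝ*} (h : |x| ≤ 1) : ∃ s : ℝ, IsSt x s :=
  exists_st_of_not_infinite fun hx => by
    simpa using (infinite_iff_abs_lt_abs.1 hx 1).trans_le h

theorem IsSt.eval {K : ℝ*[X]} {a : ℕ → ℝ} (ha : ∀ i, IsSt (K.coeff i) (a i)) {x : ℝ*} {s : ℝ}
    (hx : IsSt x s) : IsSt (K.eval x) (∑ i ∈ Finset.range (K.natDegree + 1), a i * s ^ i) := by
  rw [eval_eq_sum_range]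
  exact IsSt.sum _ fun i _ => (ha i).mul (hx.pow i)

theorem IsSt.eval_map (p : ℝ[X]) {x : ℝ*} {s : ℝ} (hx : IsSt x s) :
    IsSt ((p.map realToHyper).eval x) (p.eval s) := by
  have h := IsSt.eval (K := p.map realToHyper) (a := p.coeff)
    (fun i => by rw [coeff_map]; exact isSt_refl_real _) hx
  rwa [natDegree_map_eq_of_injective realToHyper.injective, ← eval_eq_sum_range] at h

end Hyperreal

theorem abs_coeff_le_polyNorm {n : ℕ} {H : ℝ*[X]} (hH : H.natDegree ≤ n) (i : ℕ) :
    |H.coeff i| ≤ polyNorm n H := by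
  by_cases hi : i ≤ n
  · exact Finset.le_sup' (fun i => |H.coeff i|) (Finset.mem_range_succ_iff.2 hi)
  · rw [coeff_eq_zero_of_natDegree_lt (by omega), abs_zero]
    exact (abs_nonneg _).trans
      (Finset.le_sup' (fun i => |H.coeff i|) (Finset.self_mem_range_succ n))

theorem polyNorm_pos {n : ℕ} {H : ℝ*[X]} (hH : H.natDegree ≤ n) (h0 : H ≠ 0) :
    0 < polyNorm n H := by
  obtain ⟨i, hi⟩ : ∃ i, H.coeff i ≠ 0 := by
    by_contra! h
    exact h0 (Polynomial.ext h)
  exact (abs_pos.2 hi).trans_le (abs_coeff_le_polyNorm hH i)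

theorem exists_isSt_eval_div_polyNorm {n : ℕ} {H : ℝ*[X]} (hH : H.natDegree ≤ n)
    (hpos : 0 < polyNorm n H) {ξ : ℝ*} {u : ℝ} (hξ : IsSt ξ u) :
    ∃ f : ℝ, IsSt (H.eval (u : ℝ*) / polyNorm n H) f ∧ IsSt (H.eval ξ / polyNorm n H) f := by
  set K := C (polyNorm n H)⁻¹ * H
  have hK : ∀ i, ∃ s : ℝ, IsSt (K.coeff i) s := fun i => by
    refine exists_isSt_of_abs_le_one ?_
    rw [coeff_C_mul, abs_mul, abs_inv, abs_of_pos hpos, inv_mul_le_one₀ hpos]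
    exact abs_coeff_le_polyNorm hH i
  choose a ha using hK
  have hKeval : ∀ x, K.eval x = H.eval x / polyNorm n H := fun x => by
    rw [eval_mul, eval_C, inv_mul_eq_div]
  simp only [← hKeval]
  exact ⟨_, IsSt.eval ha (isSt_refl_real u), IsSt.eval ha hξ⟩

theorem root_deformation_estimate_general (P : Polynomial ℝ) (n r : ℕ)
    (hdeg : P.natDegree = n) (u : ℝ)
    (hmult : ∀ i < r, (derivative^[i] P).eval u = 0)
    (hr : (derivative^[r] P).eval u ≠ 0)
    (L : Polynomial ℝ* → ℝ*)
    (hL : ∀ H : Polynomial ℝ*,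
      L H = -(Nat.factorial r : ℝ*) * H.eval (u : ℝ*) / (((derivative^[r] P).eval u : ℝ) : ℝ*)) :
    ∀ Q : Polynomial ℝ*, Q.natDegree = n →
      (∀ i, Infinitesimal ((Q - P.map realToHyper).coeff i)) →
      Q ≠ P.map realToHyper →
      ∀ ξ : ℝ*, Q.eval ξ = 0 → IsSt ξ u →
        ∃ e : ℝ*, Infinitesimal e ∧
          (ξ - (u : ℝ*)) ^ r = L (Q - P.map realToHyper) + e * polyNorm n (Q - P.map realToHyper) := by
  intro Q hQdeg _ hQne ξ hξ hst
  obtain ⟨G, hPG, hGu⟩ := exists_eq_X_sub_C_pow_mul_of_iterate_derivative hmult hr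
  set H := Q - P.map realToHyper
  set δ := polyNorm n H
  have hHdeg : H.natDegree ≤ n :=
    (natDegree_sub_le _ _).trans (max_le hQdeg.le (natDegree_map_le.trans hdeg.le))
  have hδ : 0 < δ := polyNorm_pos hHdeg (sub_ne_zero_of_ne hQne)
  obtain ⟨f, hfu, hfξ⟩ := exists_isSt_eval_div_polyNorm hHdeg hδ hst
  have hc : G.eval u ≠ 0 := fun h => hr (by rw [hGu, h, mul_zero])
  have hD := IsSt.eval_map G hst
  have hHξ : H.eval ξ = -((ξ - u) ^ r * (G.map realToHyper).eval ξ) := by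
    rw [eval_sub, hξ, zero_sub, hPG, Polynomial.map_mul, eval_mul, Polynomial.map_pow,
      Polynomial.map_sub, map_X, map_C, eval_pow, eval_sub, eval_X, eval_C]
    rfl
  refine ⟨H.eval (u : ℝ*) / δ / G.eval u - H.eval ξ / δ / (G.map realToHyper).eval ξ, ?_, ?_⟩
  · show IsSt _ 0
    simpa using (hfu.div (isSt_refl_real _) hc).sub (hfξ.div hD hc)
  · have hD0 := hD.ne_zero hc
    have hfact : ((r.factorial : ℝ) : ℝ*) = r.factorial := map_natCast realToHyper _
    rw [hL, hGu, hHξ, coe_mul, hfact]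
    field_simp
    ring

/-- Continuity of the roots, deformation version: if `u` is a root of `P` of
multiplicity `r`, `L(H) := -r! · H(u) / P⁽ʳ⁾(u)`, then for any `*ℝ`-deformation `Q ≠ P`
of `P` and any root `ξ` of `Q` with standard part `u`, one has
`(ξ - u)^r = L(Q - P) + ε ‖Q - P‖` for some infinitesimal `ε`. -/
theorem root_deformation_estimate (P : Polynomial ℝ) (n r : ℕ)
    (hdeg : P.natDegree = n) (hn : 1 ≤ n) (u : ℝ)
    (hmult : ∀ i < r, (derivative^[i] P).eval u = 0)
    (hr : (derivative^[r] P).eval u ≠ 0)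
    (L : Polynomial ℝ* → ℝ*)
    (hL : ∀ H : Polynomial ℝ*,
      L H = -(Nat.factorial r : ℝ*) * H.eval (u : ℝ*) / (((derivative^[r] P).eval u : ℝ) : ℝ*)) :
    ∀ Q : Polynomial ℝ*, Q.natDegree = n →
      (∀ i, Infinitesimal ((Q - P.map realToHyper).coeff i)) →
      Q ≠ P.map realToHyper →
      ∀ ξ : ℝ*, Q.eval ξ = 0 → IsSt ξ u →
        ∃ e : ℝ*, Infinitesimal e ∧
          (ξ - (u : ℝ*)) ^ r = L (Q - P.map realToHyper) + e * polyNorm n (Q - P.map realToHyper) :=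
  root_deformation_estimate_general P n r hdeg u hmult hr L hL
end

section
/- Let P ∈ ℂ[X] with deg P = n ≥ 1. For every real ε > 0 that is smaller than half of the minimal distance between any two distinct roots of P (this restriction being vacuous when P has at most one distinct root), there exists δ > 0 such that for every Q ∈ ℂ[X] with deg Q = n and |coeff_i(Q) − coeff_i(P)| ≤ δ for all 0 ≤ i ≤ n, the following hold: (i) every complex root of Q lies at distance less than ε from some root of P; (ii) for every root u of P, the number of roots of Q, counted with multiplicity, lying in the open disc of center u and radius ε equals the multiplicity of u as a root of P. -/
/-!
Match the roots of `Q` with those of `P`, with multiplicity, so that matched roots are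
`ε`-close; under the separation hypothesis this matching gives both claims. It is built by
induction on the degree. As `Q → P` coefficientwise at fixed degree, the roots of `Q` stay in a
fixed ball, on which `P` is bounded away from zero outside any neighbourhood of its roots
(compactness); so each root `z` of `Q` is near a root `u` of `P`. Then `Q /ₘ (X - C z)` tends to
`P /ₘ (X - C u)`, since its coefficients are polynomials in `z` and the coefficients of `Q`.
-/

open Polynomial Filter Topology Metric

theorem Multiset.Rel.card_filter_eq {α β : Type*} {r : α → β → Prop} {s : Multiset α}
    {t : Multiset β} {p : α → Prop} {q : β → Prop} [DecidablePred p] [DecidablePred q]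
    (h : Multiset.Rel r s t) (hpq : ∀ a, ∀ b ∈ t, r a b → (p a ↔ q b)) :
    Multiset.card (s.filter p) = Multiset.card (t.filter q) := by
  induction h with
  | zero => rfl
  | @cons a b s t hab _ ih =>
    have ih := ih fun a' b' hb' => hpq a' b' (Multiset.mem_cons_of_mem hb')
    simp only [Multiset.filter_cons, hpq a b (Multiset.mem_cons_self b t) hab, Multiset.card_add,
      ih]
    split_ifs <;> rfl

namespace Polynomial

theorem cauchyBound_le_sum_div_add_one {K : Type*} [NormedDivisionRing K] (p : K[X]) :
    (cauchyBound p : ℝ) ≤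
      (∑ i ∈ Finset.range p.natDegree, ‖p.coeff i‖) / ‖p.leadingCoeff‖ + 1 := by
  have : cauchyBound p ≤
      (∑ i ∈ Finset.range p.natDegree, ‖p.coeff i‖₊) / ‖p.leadingCoeff‖₊ + 1 := by
    unfold cauchyBound
    gcongr
    exact Finset.sup_le fun i hi =>
      Finset.single_le_sum (f := (‖p.coeff ·‖₊)) (fun _ _ => zero_le) hi
  simpa using NNReal.coe_le_coe.2 this

theorem roots_eq_cons_roots_divByMonic {R : Type*} [CommRing R] [IsDomain R] {p : R[X]} {a : R}
    (hp : p ≠ 0) (ha : p.IsRoot a) : p.roots = a ::ₘ (p /ₘ (X - C a)).roots := by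
  have hfac := mul_divByMonic_eq_iff_isRoot.2 ha
  conv_lhs => rw [← hfac]
  rw [roots_mul (hfac.symm ▸ hp), roots_X_sub_C, Multiset.singleton_add]

section CoeffNhds

variable {K : Type*} [NormedField K]

def coeffNhds (P : K[X]) : Filter K[X] :=
  comap (fun Q (i : Fin (P.natDegree + 1)) => Q.coeff i) (𝓝 fun i => P.coeff i) ⊓
    𝓟 {Q | Q.natDegree = P.natDegree}

theorem eventually_natDegree_coeffNhds (P : K[X]) :
    ∀ᶠ Q in coeffNhds P, Q.natDegree = P.natDegree :=
  mem_inf_of_right (mem_principal_self _)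

theorem tendsto_coeff_coeffNhds (P : K[X]) (i : ℕ) :
    Tendsto (·.coeff i) (coeffNhds P) (𝓝 (P.coeff i)) := by
  rcases le_or_gt i P.natDegree with hi | hi
  · have hi : i < P.natDegree + 1 := Nat.lt_succ_of_le hi
    exact ((continuous_apply (A := fun _ => K) (⟨i, hi⟩ : Fin _)).tendsto _).comp
      (tendsto_comap.mono_left inf_le_left)
  · refine tendsto_const_nhds.congr' ?_
    filter_upwards [eventually_natDegree_coeffNhds P] with Q hQ
    rw [coeff_eq_zero_of_natDegree_lt hi, coeff_eq_zero_of_natDegree_lt (hQ ▸ hi)]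

theorem tendsto_coeffNhds {α : Type*} {l : Filter α} {f : α → K[X]} {P : K[X]}
    (hdeg : ∀ᶠ a in l, (f a).natDegree = P.natDegree)
    (hcoeff : ∀ i, Tendsto (fun a => (f a).coeff i) l (𝓝 (P.coeff i))) :
    Tendsto f l (coeffNhds P) :=
  tendsto_inf.2 ⟨tendsto_comap_iff.2 (tendsto_pi_nhds.2 fun i => hcoeff i),
    tendsto_principal.2 hdeg⟩

theorem exists_pos_of_eventually_coeffNhds {P : K[X]} {p : K[X] → Prop}
    (h : ∀ᶠ Q in coeffNhds P, p Q) :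
    ∃ δ > 0, ∀ Q : K[X], Q.natDegree = P.natDegree →
      (∀ i ≤ P.natDegree, ‖Q.coeff i - P.coeff i‖ ≤ δ) → p Q := by
  obtain ⟨ε, hε, hp⟩ :=
    Metric.eventually_nhds_iff.1 (eventually_comap.1 (eventually_inf_principal.1 h))
  refine ⟨ε / 2, half_pos hε, fun Q hdeg hcoeff => hp ?_ Q rfl hdeg⟩
  refine ((dist_pi_le_iff (half_pos hε).le).2 fun i => ?_).trans_lt (half_lt_self hε)
  simpa [dist_eq_norm] using hcoeff i (Nat.lt_succ_iff.1 i.2)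

theorem tendsto_eval_coeffNhds (P : K[X]) (z : K) :
    Tendsto (fun p : K[X] × K => p.1.eval p.2) (coeffNhds P ×ˢ 𝓝 z) (𝓝 (P.eval z)) := by
  rw [eval_eq_sum_range]
  refine Tendsto.congr' ?_ (tendsto_finsetSum _ fun i _ =>
    ((tendsto_coeff_coeffNhds P i).comp tendsto_fst).mul (tendsto_snd.pow i))
  filter_upwards [tendsto_fst.eventually (eventually_natDegree_coeffNhds P)] with p hp
  rw [eval_eq_sum_range, hp]
  rfl

theorem tendsto_divByMonic_X_sub_C_coeffNhds (P : K[X]) (u : K) :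
    Tendsto (fun p : K[X] × K => p.1 /ₘ (X - C p.2)) (coeffNhds P ×ˢ 𝓝 u)
      (coeffNhds (P /ₘ (X - C u))) := by
  have hdeg : ∀ᶠ p : K[X] × K in coeffNhds P ×ˢ 𝓝 u, p.1.natDegree = P.natDegree :=
    tendsto_fst.eventually (eventually_natDegree_coeffNhds P)
  refine tendsto_coeffNhds ?_ fun i => ?_
  · filter_upwards [hdeg] with p hp
    simp only [natDegree_divByMonic _ (monic_X_sub_C _), natDegree_X_sub_C, hp]
  · simp only [coeff_divByMonic_X_sub_C]
    refine Tendsto.congr' ?_ (tendsto_finsetSum _ fun j _ =>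
      (tendsto_snd.pow _).mul ((tendsto_coeff_coeffNhds P j).comp tendsto_fst))
    filter_upwards [hdeg] with p hp
    rw [hp]
    rfl

end CoeffNhds

section Roots

variable {K : Type*} [NormedField K]

theorem exists_eventually_forall_mem_roots_norm_le {P : K[X]} (hP : P ≠ 0) :
    ∃ M, ∀ᶠ Q in coeffNhds P, ∀ z ∈ Q.roots, ‖z‖ ≤ M := by
  set b : K[X] → ℝ := fun Q =>
    (∑ i ∈ Finset.range P.natDegree, ‖Q.coeff i‖) / ‖Q.coeff P.natDegree‖ + 1
  have hlead : P.coeff P.natDegree ≠ 0 := leadingCoeff_ne_zero.2 hP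
  have hb : Tendsto b (coeffNhds P) (𝓝 (b P)) :=
    ((tendsto_finsetSum _ fun i _ => (tendsto_coeff_coeffNhds P i).norm).div
      (tendsto_coeff_coeffNhds P _).norm (norm_ne_zero_iff.2 hlead)).add_const 1
  refine ⟨b P + 1, ?_⟩
  filter_upwards [eventually_natDegree_coeffNhds P, hb.eventually (gt_mem_nhds (lt_add_one _)),
    (tendsto_coeff_coeffNhds P _).eventually_ne hlead] with Q hdeg hbQ hQlead z hz
  have hQ : Q ≠ 0 := by rintro rfl; exact hQlead (coeff_zero _)
  calc ‖z‖ ≤ cauchyBound Q := ((mem_roots hQ).1 hz).norm_lt_cauchyBound hQ |>.le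
    _ ≤ b Q := by simpa only [b, leadingCoeff, hdeg] using cauchyBound_le_sum_div_add_one Q
    _ ≤ b P + 1 := hbQ.le

theorem eventually_forall_mem_roots_mem [ProperSpace K] {P : K[X]} (hP : P ≠ 0) {U : Set K}
    (hU : U ∈ 𝓝ˢ {u | P.IsRoot u}) : ∀ᶠ Q in coeffNhds P, ∀ z ∈ Q.roots, z ∈ U := by
  obtain ⟨M, hM⟩ := exists_eventually_forall_mem_roots_norm_le hP
  set S := closedBall 0 M \ interior U
  have hS : IsCompact S := (isCompact_closedBall 0 M).diff isOpen_interior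
  have hroots : {u | P.IsRoot u} ⊆ interior U := subset_interior_iff_mem_nhdsSet.2 hU
  have hne : ∀ᶠ p in coeffNhds P ×ˢ 𝓝ˢ S, p.1.eval p.2 ≠ 0 :=
    hS.mem_prod_nhdsSet_of_forall fun y hy =>
      (tendsto_eval_coeffNhds P y).eventually_ne fun h => hy.2 (hroots h)
  filter_upwards [hM, hne.curry] with Q hQM hQS z hz
  by_contra hzU
  have hzS : z ∈ S := ⟨mem_closedBall_zero_iff.2 (hQM z hz), fun h => hzU (interior_subset h)⟩
  exact hQS.self_of_nhdsSet z hzS (isRoot_of_mem_roots hz)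

theorem eventually_forall_mem_roots_exists_mem [ProperSpace K] {P : K[X]} (hP : P ≠ 0)
    {W : K → Set (K[X] × K)} (hW : ∀ u ∈ P.roots, W u ∈ coeffNhds P ×ˢ 𝓝 u) :
    ∀ᶠ Q in coeffNhds P, ∀ z ∈ Q.roots, ∃ u ∈ P.roots, (Q, z) ∈ W u := by
  classical
  choose! A hA N hN hAN using fun u hu => mem_prod_iff.1 (hW u hu)
  have hU : (⋃ u ∈ P.roots, N u) ∈ 𝓝ˢ {u | P.IsRoot u} :=
    mem_nhdsSet_iff_forall.2 fun u hu =>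
      have hu : u ∈ P.roots := (mem_roots hP).2 hu
      mem_of_superset (hN u hu) (Set.subset_biUnion_of_mem (u := N) hu)
  filter_upwards [eventually_forall_mem_roots_mem hP hU,
    (eventually_all_finset P.roots.toFinset).2 fun u hu => hA u (Multiset.mem_toFinset.1 hu)]
    with Q hQU hQA z hz
  obtain ⟨u, hu, hzu⟩ := Set.mem_iUnion₂.1 (hQU z hz)
  exact ⟨u, hu, hAN u hu ⟨hQA u (Multiset.mem_toFinset.2 hu), hzu⟩⟩

theorem eventually_rel_roots [ProperSpace K] [IsAlgClosed K] (P : K[X]) {ε : ℝ} (hε : 0 < ε) :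
    ∀ᶠ Q in coeffNhds P, Multiset.Rel (fun z u => ‖z - u‖ < ε) Q.roots P.roots := by
  induction h : P.natDegree generalizing P with
  | zero =>
    filter_upwards [eventually_natDegree_coeffNhds P] with Q hQ
    rw [h] at hQ
    rw [eq_C_of_natDegree_eq_zero hQ, eq_C_of_natDegree_eq_zero h, roots_C, roots_C]
    exact Multiset.Rel.zero
  | succ n ih =>
    have hP : P ≠ 0 := by rintro rfl; simp at h
    have hW : ∀ u ∈ P.roots, {p : K[X] × K | ‖p.2 - u‖ < ε ∧
        Multiset.Rel (fun z u => ‖z - u‖ < ε) (p.1 /ₘ (X - C p.2)).roots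
          (P /ₘ (X - C u)).roots} ∈ coeffNhds P ×ˢ 𝓝 u := fun u _ =>
      (tendsto_snd.eventually (eventually_norm_sub_lt u hε)).and
        ((tendsto_divByMonic_X_sub_C_coeffNhds P u).eventually (ih _ (by
          rw [natDegree_divByMonic _ (monic_X_sub_C u), natDegree_X_sub_C, h, Nat.add_sub_cancel])))
    filter_upwards [eventually_forall_mem_roots_exists_mem hP hW, eventually_natDegree_coeffNhds P]
      with Q hQ hQdeg
    have hQ0 : Q ≠ 0 := by rintro rfl; simp [h] at hQdeg
    obtain ⟨z, hz⟩ := IsAlgClosed.exists_root Q (by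
      rw [degree_eq_natDegree hQ0, hQdeg, h]; exact_mod_cast n.succ_ne_zero)
    have hz : z ∈ Q.roots := (mem_roots hQ0).2 hz
    obtain ⟨u, hu, hzu, hrel⟩ := hQ z hz
    rw [roots_eq_cons_roots_divByMonic hQ0 (isRoot_of_mem_roots hz),
      roots_eq_cons_roots_divByMonic hP (isRoot_of_mem_roots hu)]
    exact hrel.cons hzu

end Roots

end Polynomial

theorem continuity_of_roots_general (P : Polynomial ℂ) (n : ℕ) (hdeg : P.natDegree = n)
    (ε : ℝ) (hε : 0 < ε)
    (hsep : ∀ u ∈ P.roots, ∀ v ∈ P.roots, u ≠ v → 2 * ε < ‖u - v‖) :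
    ∃ δ > 0, ∀ Q : Polynomial ℂ, Q.natDegree = n →
      (∀ i ≤ n, ‖Q.coeff i - P.coeff i‖ ≤ δ) →
      (∀ z ∈ Q.roots, ∃ u ∈ P.roots, ‖z - u‖ < ε) ∧
      (∀ u ∈ P.roots,
        Multiset.card (Q.roots.filter fun z => ‖z - u‖ < ε)
          = P.rootMultiplicity u) := by
  subst hdeg
  obtain ⟨δ, hδ, hmatch⟩ := exists_pos_of_eventually_coeffNhds (eventually_rel_roots P hε)
  refine ⟨δ, hδ, fun Q hQdeg hQcoeff => ?_⟩
  have hrel := hmatch Q hQdeg hQcoeff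
  refine ⟨fun z hz => Multiset.exists_mem_of_rel_of_mem hrel hz, fun u hu => ?_⟩
  rw [← count_roots, Multiset.count_eq_card_filter_eq]
  refine hrel.card_filter_eq fun z v hv hzv => ⟨fun hzu => by_contra fun huv => ?_, ?_⟩
  · have := norm_sub_le_norm_sub_add_norm_sub u z v
    rw [norm_sub_rev u z] at this
    linarith [hsep u hu v hv huv]
  · rintro rfl
    exact hzv

/-- Continuous dependence of the roots of a complex polynomial on its coefficients:
for `ε > 0` smaller than half the minimal distance between distinct roots of `P`,
there is `δ > 0` such that any `Q` of the same degree whose coefficients are `δ`-close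
to those of `P` has all its roots within `ε` of roots of `P`, and in the open disc of
radius `ε` around each root `u` of `P` the polynomial `Q` has exactly as many roots
(with multiplicity) as the multiplicity of `u`. -/
theorem continuity_of_roots (P : Polynomial ℂ) (n : ℕ) (hdeg : P.natDegree = n)
    (hn : 1 ≤ n) (ε : ℝ) (hε : 0 < ε)
    (hsep : ∀ u ∈ P.roots, ∀ v ∈ P.roots, u ≠ v → 2 * ε < ‖u - v‖) :
    ∃ δ > 0, ∀ Q : Polynomial ℂ, Q.natDegree = n →
      (∀ i ≤ n, ‖Q.coeff i - P.coeff i‖ ≤ δ) →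
      (∀ z ∈ Q.roots, ∃ u ∈ P.roots, ‖z - u‖ < ε) ∧
      (∀ u ∈ P.roots,
        Multiset.card (Q.roots.filter fun z => ‖z - u‖ < ε)
          = P.rootMultiplicity u) :=
  continuity_of_roots_general P n hdeg ε hε hsep
end

section
/- Let P ∈ ℝ[X], let Q be a *ℝ-deformation of P, and set Ξ := Q − P ∈ ℝ*[X]. Let u ∈ ℝ with P(u) = 0, P'(u) = 0 and P''(u) ≠ 0, and let ξ ∈ ℝ* be a nonzero infinitesimal such that Q(u + ξ) = 0. Then Ξ(u) + ξ·Ξ'(u) ≠ 0, where Ξ' is the derivative of Ξ. -/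
/-!
Measure size with the Archimedean valuation `v = ArchimedeanClass.mk` on `ℝ*`: infinitesimals are
the elements with `v > 0`, and nonzero reals have `v = 0`. Expanding `Q` at `u` to second order,
`Q(u + ξ) = Q(u) + ξ Q'(u) + ξ² T(ξ)` with `T = (taylor u Q).divX.divX`, and `Q(u) + ξ Q'(u) =
Ξ(u) + ξ Ξ'(u)` because `u` is a double root of `P`. If this jet vanished, then `T(ξ) = 0`. But
`T` has finite coefficients and constant term `P''(u)/2` plus an infinitesimal, so `v(T(ξ)) = 0`,
i.e. `T(ξ) ≠ 0`.
-/

open Hyperreal Polynomial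

namespace Polynomial

theorem eval_add_eq_eval_add_mul_derivative_add_sq_mul {R : Type*} [CommSemiring R]
    (p : R[X]) (a x : R) :
    p.eval (a + x) =
      p.eval a + x * (derivative p).eval a + x ^ 2 * (taylor a p).divX.divX.eval x := by
  have h := congrArg (eval x) (divX_mul_X_add (taylor a p))
  rw [← divX_mul_X_add (taylor a p).divX] at h
  simp only [eval_add, eval_mul, eval_X, eval_C, coeff_divX, taylor_eval, zero_add,
    taylor_coeff_zero, taylor_coeff_one] at h
  rw [add_comm a, ← h]
  ring

theorem eval_hasseDeriv_two_ne_zero {R : Type*} [Semiring R] {p : R[X]} {a : R}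
    (h : (derivative (derivative p)).eval a ≠ 0) : (hasseDeriv 2 p).eval a ≠ 0 := by
  have h2 : derivative (derivative p) = 2 • hasseDeriv 2 p := by
    simpa using (congrFun (factorial_smul_hasseDeriv (R := R) 2) p).symm
  intro h0
  rw [h2, eval_smul, h0, smul_zero] at h
  exact h rfl

end Polynomial

namespace AddValuation

variable {R Γ : Type*} [CommRing R] [LinearOrderedAddCommMonoidWithTop Γ]
  (v : AddValuation R Γ)

theorem map_natCast_nonneg (n : ℕ) : 0 ≤ v n := by
  induction n with
  | zero => simp
  | succ n ih => exact Nat.cast_succ (R := R) n ▸ v.map_le_add ih (v.map_one).ge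

theorem le_map_coeff_hasseDeriv (p : R[X]) (k i : ℕ) :
    v (p.coeff (i + k)) ≤ v ((hasseDeriv k p).coeff i) := by
  rw [hasseDeriv_coeff, v.map_mul]
  exact le_add_of_nonneg_left (v.map_natCast_nonneg _)

variable {v}

theorem le_map_eval {p : R[X]} {x : R} {c : Γ} (hp : ∀ i, c ≤ v (p.coeff i))
    (hx : 0 ≤ v x) : c ≤ v (p.eval x) := by
  rw [eval_eq_sum_range]
  refine v.map_le_sum fun i _ => ?_
  rw [v.map_mul, v.map_pow]
  exact (hp i).trans (le_add_of_nonneg_right (nsmul_nonneg hx i))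

theorem lt_map_eval {p : R[X]} {x : R} {c : Γ} (hc : c ≠ ⊤) (hp : ∀ i, c < v (p.coeff i))
    (hx : 0 ≤ v x) : c < v (p.eval x) := by
  rw [eval_eq_sum_range]
  refine v.map_lt_sum hc fun i _ => ?_
  rw [v.map_mul, v.map_pow]
  exact (hp i).trans_le (le_add_of_nonneg_right (nsmul_nonneg hx i))

theorem le_map_coeff_taylor {p : R[X]} {a : R} {c : Γ} (hp : ∀ i, c ≤ v (p.coeff i))
    (ha : 0 ≤ v a) (i : ℕ) : c ≤ v ((taylor a p).coeff i) := by
  rw [taylor_coeff]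
  exact le_map_eval (fun j => (hp _).trans (v.le_map_coeff_hasseDeriv p i j)) ha

theorem lt_map_coeff_taylor {p : R[X]} {a : R} {c : Γ} (hc : c ≠ ⊤)
    (hp : ∀ i, c < v (p.coeff i)) (ha : 0 ≤ v a) (i : ℕ) : c < v ((taylor a p).coeff i) := by
  rw [taylor_coeff]
  exact lt_map_eval hc (fun j => (hp _).trans_le (v.le_map_coeff_hasseDeriv p i j)) ha

theorem map_eval_eq_zero {p : R[X]} {x : R} (hp : ∀ i, 0 ≤ v (p.coeff i))
    (h0 : v (p.coeff 0) = 0) (hx : 0 < v x) : v (p.eval x) = 0 := by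
  have hsplit : p.eval x - p.coeff 0 = p.divX.eval x * x := by
    conv_lhs => rw [← divX_mul_X_add p]
    simp
  have hrest : 0 < v (p.eval x - p.coeff 0) := by
    rw [hsplit, v.map_mul]
    exact hx.trans_le (le_add_of_nonneg_left (le_map_eval (fun i => hp _) hx.le))
  exact (v.map_eq_of_lt_sub (h0 ▸ hrest)).trans h0

end AddValuation

theorem realToHyper_apply (r : ℝ) : realToHyper r = r := rfl

section Deformation

variable {P : ℝ[X]} {Q : ℝ*[X]}

theorem archimedeanClassMk_coeff_nonneg_of_deformation
    (hΞ : ∀ i, 0 < ArchimedeanClass.mk ((Q - P.map realToHyper).coeff i)) (i : ℕ) :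
    0 ≤ ArchimedeanClass.mk (Q.coeff i) := by
  have hP : 0 ≤ ArchimedeanClass.mk ((P.map realToHyper).coeff i) := by
    rw [coeff_map, realToHyper_apply]
    exact archimedeanClassMk_coe_nonneg (P.coeff i)
  simpa using (ArchimedeanClass.addValuation ℝ*).map_le_add (hΞ i).le hP

theorem archimedeanClassMk_coeff_taylor_two_of_deformation
    (hΞ : ∀ i, 0 < ArchimedeanClass.mk ((Q - P.map realToHyper).coeff i)) {u : ℝ}
    (hu'' : (derivative (derivative P)).eval u ≠ 0) :
    ArchimedeanClass.mk ((taylor (u : ℝ*) Q).coeff 2) = 0 := by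
  set v := ArchimedeanClass.addValuation ℝ*
  have hsplit : (taylor (u : ℝ*) Q).coeff 2 = realToHyper ((hasseDeriv 2 P).eval u) +
      (taylor (u : ℝ*) (Q - P.map realToHyper)).coeff 2 := by
    rw [← taylor_coeff, ← coeff_map, map_taylor, realToHyper_apply, ← coeff_add, ← map_add,
      add_sub_cancel]
  have hP : v (realToHyper ((hasseDeriv 2 P).eval u)) = 0 :=
    archimdeanClassMk_coe (eval_hasseDeriv_two_ne_zero hu'')
  have hΞ₂ : 0 < v ((taylor (u : ℝ*) (Q - P.map realToHyper)).coeff 2) :=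
    AddValuation.lt_map_coeff_taylor ArchimedeanClass.zero_ne_top hΞ
      (archimedeanClassMk_coe_nonneg u) 2
  rw [hsplit, ← hP]
  exact v.map_add_eq_of_lt_left (hP ▸ hΞ₂)

end Deformation

theorem xi_first_jet_ne_zero_of_double_root_general (P : Polynomial ℝ) (Q : Polynomial ℝ*)
    (hdef : ∀ i, Infinitesimal ((Q - P.map realToHyper).coeff i))
    (u : ℝ) (hu : P.eval u = 0) (hu' : (derivative P).eval u = 0)
    (hu'' : (derivative (derivative P)).eval u ≠ 0)
    (ξ : ℝ*) (hξ0 : ξ ≠ 0) (hξ : Infinitesimal ξ)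
    (hroot : Q.eval ((u : ℝ*) + ξ) = 0) :
    (Q - P.map realToHyper).eval (u : ℝ*) +
      ξ * (derivative (Q - P.map realToHyper)).eval (u : ℝ*) ≠ 0 := by
  set v := ArchimedeanClass.addValuation ℝ*
  have hΞ i := infinitesimal_iff.1 (hdef i)
  set T := (taylor (u : ℝ*) Q).divX.divX
  intro hjet
  have hT : T.eval ξ = 0 := by
    have hjetQ : Q.eval (u : ℝ*) + ξ * (derivative Q).eval (u : ℝ*) = 0 := by
      simpa [← realToHyper_apply, eval_map, eval₂_at_apply, derivative_map, hu, hu'] using hjet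
    have h := eval_add_eq_eval_add_mul_derivative_add_sq_mul Q u ξ
    rw [hroot, hjetQ, zero_add] at h
    exact (mul_eq_zero.1 h.symm).resolve_left (pow_ne_zero 2 hξ0)
  have hT_nonneg (i : ℕ) : 0 ≤ v (T.coeff i) := by
    simpa [T, coeff_divX] using v.le_map_coeff_taylor
      (archimedeanClassMk_coeff_nonneg_of_deformation hΞ) (archimedeanClassMk_coe_nonneg u) (i + 2)
  have hT₀ : v (T.coeff 0) = 0 := by
    simpa [v, T, coeff_divX] using archimedeanClassMk_coeff_taylor_two_of_deformation hΞ hu''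
  simpa [hT] using v.map_eval_eq_zero hT_nonneg hT₀ (infinitesimal_iff.1 hξ)

/-- If `Q` is a `*ℝ`-deformation of `P`, `Ξ = Q - P`, `u` is a double root of `P`
(`P(u) = P'(u) = 0`, `P''(u) ≠ 0`) and `u + ξ` is a root of `Q` with `ξ` a nonzero
infinitesimal, then `Ξ(u) + ξ·Ξ'(u) ≠ 0`. -/
theorem xi_first_jet_ne_zero_of_double_root (P : Polynomial ℝ) (Q : Polynomial ℝ*)
    (hdeg : Q.natDegree = P.natDegree)
    (hdef : ∀ i, Infinitesimal ((Q - P.map realToHyper).coeff i))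
    (u : ℝ) (hu : P.eval u = 0) (hu' : (derivative P).eval u = 0)
    (hu'' : (derivative (derivative P)).eval u ≠ 0)
    (ξ : ℝ*) (hξ0 : ξ ≠ 0) (hξ : Infinitesimal ξ)
    (hroot : Q.eval ((u : ℝ*) + ξ) = 0) :
    (Q - P.map realToHyper).eval (u : ℝ*) +
      ξ * (derivative (Q - P.map realToHyper)).eval (u : ℝ*) ≠ 0 :=
  xi_first_jet_ne_zero_of_double_root_general P Q hdef u hu hu' hu'' ξ hξ0 hξ hroot
end

section
/- Let P₁, P₂ ∈ ℝ[X] with P₂ ≠ 0, and let Q₁, Q₂ ∈ ℝ*[X] be *ℝ-deformations of P₁ and P₂ respectively. Write P₁ = P₂·P₃ + R with deg R < deg P₂ for the Euclidean division in ℝ[X], and Q₁ = Q₂·Q₃ + S with deg S < deg Q₂ for the Euclidean division in ℝ*[X]. Then every coefficient of Q₃ − P₃ and every coefficient of S − R is infinitesimal (P₃ and R being viewed in ℝ*[X] via coefficientwise coercion). -/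
open Hyperreal Polynomial

/-! With `E = Q₁ - P₁ - (Q₂ - P₂) P₃`, `q = Q₃ - P₃` and `r = S - R` one has `E = Q₂ q + r`,
`deg r < deg Q₂`, and `E` is infinitesimal. Because `Q₂` is finite with a non-infinitesimal leading
coefficient, the coefficient of `E` in degree `deg Q₂ + deg q` shows that the leading coefficient of
`q` is infinitesimal; removing that term keeps `E` infinitesimal, so induction on the number of
terms of `q` makes `q`, and then `r`, infinitesimal. -/

open ArchimedeanClass

variable {K : Type*} [CommRing K] [LinearOrder K] [IsStrictOrderedRing K]

theorem ArchimedeanClass.mk_pos_of_mk_mul_pos {x y : K} (hxy : 0 < mk (x * y)) (hx : mk x ≤ 0) :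
    0 < mk y := by
  rw [mk_mul] at hxy
  by_contra! hy
  exact (add_nonpos hx hy).not_gt hxy

namespace Polynomial

-- `x` is infinitesimal iff `0 < mk x`, and finite iff `0 ≤ mk x`.
def InfinitesimalCoeffs (p : K[X]) : Prop := ∀ i, 0 < mk (p.coeff i)

def FiniteCoeffs (p : K[X]) : Prop := ∀ i, 0 ≤ mk (p.coeff i)

namespace InfinitesimalCoeffs

variable {p q : K[X]}

theorem add (hp : InfinitesimalCoeffs p) (hq : InfinitesimalCoeffs q) :
    InfinitesimalCoeffs (p + q) := fun i =>
  (lt_min (hp i) (hq i)).trans_le (by simpa only [coeff_add] using min_le_mk_add _ _)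

theorem sub (hp : InfinitesimalCoeffs p) (hq : InfinitesimalCoeffs q) :
    InfinitesimalCoeffs (p - q) := fun i =>
  (lt_min (hp i) (hq i)).trans_le (by simpa only [coeff_sub] using min_le_mk_sub _ _)

theorem mul (hp : InfinitesimalCoeffs p) (hq : FiniteCoeffs q) :
    InfinitesimalCoeffs (p * q) := fun i => by
  rw [coeff_mul]
  refine Finset.sum_induction _ (0 < mk ·)
    (fun a b ha hb => (lt_min ha hb).trans_le (min_le_mk_add a b))
    (by simpa using zero_ne_top.lt_top) fun x _ => ?_
  rw [mk_mul]
  exact add_pos_of_pos_of_nonneg (hp x.1) (hq x.2)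

end InfinitesimalCoeffs

theorem mk_leadingCoeff_pos_of_mul_add {B q r : K[X]} (hB : mk B.leadingCoeff ≤ 0)
    (hE : InfinitesimalCoeffs (B * q + r)) (hr : r.degree < B.degree) :
    0 < mk q.leadingCoeff := by
  have hB0 : B ≠ 0 := by rintro rfl; simp at hB
  have hr_top : r.coeff (B.natDegree + q.natDegree) = 0 := by
    refine coeff_eq_zero_of_degree_lt (hr.trans_le ?_)
    rw [degree_eq_natDegree hB0]
    exact_mod_cast Nat.le_add_right _ _
  have := hE (B.natDegree + q.natDegree)
  rw [coeff_add, coeff_mul_degree_add_degree, hr_top, add_zero] at this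
  exact mk_pos_of_mk_mul_pos this hB

theorem InfinitesimalCoeffs.of_mul_add {B q r : K[X]} (hBfin : FiniteCoeffs B)
    (hB : mk B.leadingCoeff ≤ 0) (hE : InfinitesimalCoeffs (B * q + r)) (hr : r.degree < B.degree) :
    InfinitesimalCoeffs q ∧ InfinitesimalCoeffs r := by
  by_cases hq : q = 0
  · subst hq
    exact ⟨fun i => by simpa using zero_ne_top.lt_top, by simpa using hE⟩
  set lead := C q.leadingCoeff * X ^ q.natDegree
  have hlead : InfinitesimalCoeffs lead := fun i => by
    by_cases hi : i = q.natDegree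
    · simpa [lead, hi] using mk_leadingCoeff_pos_of_mul_add hB hE hr
    · simpa [lead, coeff_X_pow, hi] using zero_ne_top.lt_top
  have hE' : InfinitesimalCoeffs (B * q.eraseLead + r) := by
    have := hE.sub (hlead.mul hBfin)
    rwa [← eraseLead_add_C_mul_X_pow q, mul_add, add_right_comm, mul_comm lead,
      add_sub_cancel_right] at this
  have ⟨hq', hr'⟩ := hE'.of_mul_add hBfin hB hr
  exact ⟨by simpa only [lead, eraseLead_add_C_mul_X_pow] using hq'.add hlead, hr'⟩
termination_by q.support.card
decreasing_by exact eraseLead_support_card_lt hq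

end Polynomial

theorem finiteCoeffs_map_realToHyper (P : ℝ[X]) : FiniteCoeffs (P.map realToHyper) := fun i => by
  rw [coeff_map]
  exact archimedeanClassMk_coe_nonneg _

section Deformation

variable {Q : ℝ*[X]} {P : ℝ[X]}

theorem Polynomial.FiniteCoeffs.of_infinitesimalCoeffs_sub
    (h : InfinitesimalCoeffs (Q - P.map realToHyper)) : FiniteCoeffs Q := fun i =>
  (le_min (h i).le (finiteCoeffs_map_realToHyper P i)).trans
    (by simpa only [coeff_sub, sub_add_cancel] using
      min_le_mk_add ((Q - P.map realToHyper).coeff i) ((P.map realToHyper).coeff i))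

theorem mk_leadingCoeff_eq_zero_of_infinitesimalCoeffs_sub (hP : P ≠ 0)
    (hdeg : Q.natDegree = P.natDegree) (h : InfinitesimalCoeffs (Q - P.map realToHyper)) :
    mk Q.leadingCoeff = 0 := by
  have hP_lead : mk (P.map realToHyper).leadingCoeff = 0 := by
    rw [leadingCoeff_map]
    exact archimdeanClassMk_coe (leadingCoeff_ne_zero.2 hP)
  have hQ_lead : Q.leadingCoeff =
      (Q - P.map realToHyper).coeff P.natDegree + (P.map realToHyper).leadingCoeff := by
    rw [coeff_sub, leadingCoeff, leadingCoeff, natDegree_map, hdeg, sub_add_cancel]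
  rw [hQ_lead, mk_add_eq_mk_right (hP_lead ▸ h _), hP_lead]

end Deformation

theorem euclidean_division_of_deformations_general (P₁ P₂ : Polynomial ℝ) (hP₂ : P₂ ≠ 0)
    (Q₁ Q₂ : Polynomial ℝ*)
    (hdeg₂ : Q₂.natDegree = P₂.natDegree)
    (hdef₁ : ∀ i, Infinitesimal ((Q₁ - P₁.map realToHyper).coeff i))
    (hdef₂ : ∀ i, Infinitesimal ((Q₂ - P₂.map realToHyper).coeff i))
    (P₃ R : Polynomial ℝ) (hPdiv : P₁ = P₂ * P₃ + R) (hPrem : R.degree < P₂.degree)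
    (Q₃ S : Polynomial ℝ*) (hQdiv : Q₁ = Q₂ * Q₃ + S) (hQrem : S.degree < Q₂.degree) :
    (∀ i, Infinitesimal ((Q₃ - P₃.map realToHyper).coeff i)) ∧
    (∀ i, Infinitesimal ((S - R.map realToHyper).coeff i)) := by
  simp only [infinitesimal_iff] at hdef₁ hdef₂ ⊢
  have hQ₂ : Q₂ ≠ 0 := by rintro rfl; simp at hQrem
  have hdegree : Q₂.degree = P₂.degree := by
    rw [degree_eq_natDegree hQ₂, degree_eq_natDegree hP₂, hdeg₂]
  have hrem : (S - R.map realToHyper).degree < Q₂.degree :=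
    (degree_sub_le _ _).trans_lt (max_lt hQrem (by rwa [degree_map, hdegree]))
  have hsplit : Q₂ * (Q₃ - P₃.map realToHyper) + (S - R.map realToHyper) =
      (Q₁ - P₁.map realToHyper) - (Q₂ - P₂.map realToHyper) * P₃.map realToHyper := by
    rw [hQdiv, hPdiv, Polynomial.map_add, Polynomial.map_mul]
    ring
  have hE : InfinitesimalCoeffs (Q₂ * (Q₃ - P₃.map realToHyper) + (S - R.map realToHyper)) :=
    hsplit ▸ InfinitesimalCoeffs.sub hdef₁ (.mul hdef₂ (finiteCoeffs_map_realToHyper P₃))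
  exact hE.of_mul_add (.of_infinitesimalCoeffs_sub hdef₂)
    (mk_leadingCoeff_eq_zero_of_infinitesimalCoeffs_sub hP₂ hdeg₂ hdef₂).le hrem

/-- The quotient and remainder of the Euclidean division of `*ℝ`-deformations `Q₁, Q₂`
of `P₁, P₂` are `*ℝ`-deformations of the quotient and remainder of the Euclidean
division of `P₁` by `P₂`. -/
theorem euclidean_division_of_deformations (P₁ P₂ : Polynomial ℝ) (hP₂ : P₂ ≠ 0)
    (Q₁ Q₂ : Polynomial ℝ*)
    (hdeg₁ : Q₁.natDegree = P₁.natDegree) (hdeg₂ : Q₂.natDegree = P₂.natDegree)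
    (hdef₁ : ∀ i, Infinitesimal ((Q₁ - P₁.map realToHyper).coeff i))
    (hdef₂ : ∀ i, Infinitesimal ((Q₂ - P₂.map realToHyper).coeff i))
    (P₃ R : Polynomial ℝ) (hPdiv : P₁ = P₂ * P₃ + R) (hPrem : R.degree < P₂.degree)
    (Q₃ S : Polynomial ℝ*) (hQdiv : Q₁ = Q₂ * Q₃ + S) (hQrem : S.degree < Q₂.degree) :
    (∀ i, Infinitesimal ((Q₃ - P₃.map realToHyper).coeff i)) ∧
    (∀ i, Infinitesimal ((S - R.map realToHyper).coeff i)) :=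
  euclidean_division_of_deformations_general P₁ P₂ hP₂ Q₁ Q₂ hdeg₂ hdef₁ hdef₂ P₃ R hPdiv hPrem Q₃ S
    hQdiv hQrem
end
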